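/- arXiv:2603.22894 — 4 statements merged into one kernel-verified Lean document; each statement's English description precedes it below -/
import Mathlib

section
/- Two vertices p/q and p'/q' (with gcd(p,q)=1 and gcd(p',q')=1) lie in the same connected component of the intersection-number-2 curve graph of the torus if and only if p ≡ p' (mod 2) and q ≡ q' (mod 2). In particular the graph, whose vertices are pairs of coprime integers up to sign and whose edges join (p,q), (p',q') with |pq' - p'q| = 2, has exactly three connected components, indexed by the residues (1,0), (0,1), (1,1) of (p,q) mod 2. -/
/-- A coprime pair of integers, representing a slope on the torus. -/
abbrev CPair : Type := {v : ℤ × ℤ // IsCoprime v.1 v.2}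

/-- Identify a coprime pair with its negative. -/
def signSetoid : Setoid CPair where
  r v w := w.1 = v.1 ∨ w.1 = -v.1
  iseqv := by
    refine ⟨fun v => Or.inl rfl, ?_, ?_⟩
    · rintro v w (h | h)
      · exact Or.inl h.symm
      · right; rw [h, neg_neg]
    · rintro u v w (h1 | h1) (h2 | h2)
      · exact Or.inl (h2.trans h1)
      · right; rw [h2, h1]
      · right; rw [h2, h1]
      · left; rw [h2, h1, neg_neg]

/-- Isotopy classes of essential simple closed curves on the torus:
coprime pairs of integers up to simultaneous sign change. -/
def Slope : Type := Quotient signSetoid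

/-- The intersection number 2 curve complex of the torus: vertices are slopes,
and two slopes are adjacent iff their geometric intersection number `|p*q' - p'*q|` is `2`. -/
def slopeGraph : SimpleGraph Slope where
  Adj x y := ∃ v w : CPair, x = Quotient.mk signSetoid v ∧ y = Quotient.mk signSetoid w ∧
    |v.1.1 * w.1.2 - w.1.1 * v.1.2| = 2
  symm := by
    constructor
    rintro x y ⟨v, w, hx, hy, h⟩
    exact ⟨w, v, hy, hx, by rw [abs_sub_comm] at h; exact h⟩
  loopless := by
    constructor
    rintro x ⟨v, w, hx, hy, h⟩
    have hr : w.1 = v.1 ∨ w.1 = -v.1 := Quotient.exact (hx.symm.trans hy)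
    rcases hr with h1 | h1 <;> rw [h1] at h <;> simp at h


/-! The mod-2 residue of a slope is invariant along edges because `pq' - p'q` is even exactly
when two coprime pairs agree mod 2. Conversely, if `v = (c, d)` has `c² + d² ≥ 3`, shift a
Bezout partner `u` of `v` by multiples of `v` until `0 ≤ ⟪u, v⟫ ≤ |v|² / 2`; then `v - 2u` is a
neighbour of `v`, and Lagrange's identity `|u|²|v|² = ⟪u, v⟫² + 1` makes it strictly shorter.
Descending, every slope reaches one of `1/0, 0/1, 1/1, -1/1`, and among these two slopes of the
same parity coincide or are adjacent. -/

open SimpleGraph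

lemma not_even_and_even_of_isCoprime {p q : ℤ} (h : IsCoprime p q) : ¬(Even p ∧ Even q) := by
  rintro ⟨hp, hq⟩
  have := h.isUnit_of_dvd' hp.two_dvd hq.two_dvd
  norm_num [Int.isUnit_iff] at this

lemma emod_two_eq_of_two_dvd_det {p q p' q' : ℤ} (h : IsCoprime p q) (h' : IsCoprime p' q')
    (hd : 2 ∣ p * q' - p' * q) : p % 2 = p' % 2 ∧ q % 2 = q' % 2 := by
  have hpq := not_even_and_even_of_isCoprime h
  have hpq' := not_even_and_even_of_isCoprime h'
  rw [← even_iff_two_dvd] at hd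
  simp only [Int.even_sub, Int.even_mul] at hd
  simp only [Int.even_iff] at *
  omega

lemma two_dvd_det_of_emod_two_eq {p q p' q' : ℤ} (hp : p % 2 = p' % 2) (hq : q % 2 = q' % 2) :
    2 ∣ p * q' - p' * q :=
  (Int.ModEq.mul hp hq.symm).symm.dvd

lemma eq_or_eq_neg_of_det_eq_zero {p q p' q' : ℤ} (h : IsCoprime p q) (h' : IsCoprime p' q')
    (hd : p * q' - p' * q = 0) : (p', q') = (p, q) ∨ (p', q') = -(p, q) := by
  obtain ⟨a, b, hab⟩ := h
  -- `(p', q') = m • (p, q)` with `m = a p' + b q'`; coprimality of `(p', q')` forces `m = ±1`.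
  have hp' : p' = (a * p' + b * q') * p := by linear_combination (-p') * hab - b * hd
  have hq' : q' = (a * p' + b * q') * q := by linear_combination (-q') * hab + a * hd
  have hunit := h'.isUnit_of_dvd' (Dvd.intro _ hp'.symm) (Dvd.intro _ hq'.symm)
  rcases Int.isUnit_iff.mp hunit with hm | hm <;> rw [hm] at hp' hq'
  · left; ext <;> simp [hp', hq']
  · right; ext <;> simp [hp', hq']

lemma exists_abs_det_eq_one_inner_le_half {c d : ℤ} (h : IsCoprime c d) (hQ : 0 < c ^ 2 + d ^ 2) :
    ∃ a b, |c * b - a * d| = 1 ∧ 0 ≤ a * c + b * d ∧ 2 * (a * c + b * d) ≤ c ^ 2 + d ^ 2 := by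
  obtain ⟨x, y, hxy⟩ := h
  set Q := c ^ 2 + d ^ 2 with hQdef
  set t₀ := -y * c + x * d
  -- Shifting the partner `(-y, x)` by `k • (c, d)` keeps the determinant and adds `k Q` to
  -- the inner product; `k = -(t₀ / Q)` brings it to `t₀ % Q ∈ [0, Q)`.
  set k := -(t₀ / Q)
  have hdet : c * (x + k * d) - (-y + k * c) * d = 1 := by linear_combination hxy
  have hinner : (-y + k * c) * c + (x + k * d) * d = t₀ % Q := by
    rw [Int.emod_def]; ring
  have h0 := Int.emod_nonneg t₀ hQ.ne'
  have hlt := Int.emod_lt_of_pos t₀ hQ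
  by_cases hhalf : 2 * (t₀ % Q) ≤ Q
  · exact ⟨-y + k * c, x + k * d, by rw [hdet, abs_one], hinner ▸ h0, hinner ▸ hhalf⟩
  · have hinner' : (c - (-y + k * c)) * c + (d - (x + k * d)) * d = Q - t₀ % Q := by
      rw [hQdef, ← hinner]; ring
    refine ⟨c - (-y + k * c), d - (x + k * d), ?_, by linarith, by linarith⟩
    rw [show c * (d - (x + k * d)) - (c - (-y + k * c)) * d = -1 by linear_combination -hdet]
    rfl

lemma exists_isCoprime_abs_det_eq_two_sq_add_sq_lt {c d : ℤ} (h : IsCoprime c d)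
    (hQ : 3 ≤ c ^ 2 + d ^ 2) :
    ∃ c' d', IsCoprime c' d' ∧ |c * d' - c' * d| = 2 ∧ c' ^ 2 + d' ^ 2 < c ^ 2 + d ^ 2 := by
  obtain ⟨a, b, hdet, ht, htQ⟩ := exists_abs_det_eq_one_inner_le_half h (by linarith)
  have hdet_sq : (c * b - a * d) ^ 2 = 1 := by rw [← sq_abs, hdet, one_pow]
  have hlagrange : (a ^ 2 + b ^ 2) * (c ^ 2 + d ^ 2) = (a * c + b * d) ^ 2 + 1 := by
    linear_combination hdet_sq
  have hshorter : a ^ 2 + b ^ 2 < a * c + b * d := by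
    rcases (by omega : a * c + b * d = 0 ∨ 1 ≤ a * c + b * d) with h0 | h1
    · have : c ^ 2 + d ^ 2 = 1 :=
        Int.eq_one_of_mul_eq_one_left (by positivity) (by simpa [h0] using hlagrange)
      omega
    · nlinarith
  refine ⟨c - 2 * a, d - 2 * b, ⟨(c * b - a * d) * b, -(c * b - a * d) * a, ?_⟩, ?_, ?_⟩
  · linear_combination hdet_sq
  · rw [show c * (d - 2 * b) - (c - 2 * a) * d = -2 * (c * b - a * d) by ring, abs_mul, hdet]
    norm_num
  · nlinarith

lemma slopeGraph_adj_mk {v w : CPair} (h : |v.1.1 * w.1.2 - w.1.1 * v.1.2| = 2) :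
    slopeGraph.Adj (Quotient.mk signSetoid v) (Quotient.mk signSetoid w) :=
  ⟨v, w, rfl, rfl, h⟩

def Slope.parity : Slope → ℤ × ℤ :=
  Quotient.lift (fun v : CPair => (v.1.1 % 2, v.1.2 % 2)) <| by
    rintro v w (h | h) <;> simp only [h, Prod.fst_neg, Prod.snd_neg, Prod.mk.injEq]
    omega

lemma Slope.parity_mk (v : CPair) :
    Slope.parity (Quotient.mk signSetoid v) = (v.1.1 % 2, v.1.2 % 2) := rfl

lemma Slope.parity_eq_of_adj {x y : Slope} (h : slopeGraph.Adj x y) : x.parity = y.parity := by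
  obtain ⟨v, w, rfl, rfl, hd⟩ := h
  obtain ⟨hp, hq⟩ := emod_two_eq_of_two_dvd_det v.2 w.2 ((dvd_abs _ _).mp (by rw [hd]))
  rw [parity_mk, parity_mk, hp, hq]

lemma Slope.parity_eq_of_reachable {x y : Slope} (h : slopeGraph.Reachable x y) :
    x.parity = y.parity := by
  rw [reachable_iff_reflTransGen] at h
  induction h with
  | refl => rfl
  | tail _ hadj ih => exact ih.trans (parity_eq_of_adj hadj)

lemma exists_reachable_sq_add_sq_le_two (v : CPair) :
    ∃ w : CPair, w.1.1 ^ 2 + w.1.2 ^ 2 ≤ 2 ∧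
      slopeGraph.Reachable (Quotient.mk signSetoid v) (Quotient.mk signSetoid w) := by
  by_cases hv : v.1.1 ^ 2 + v.1.2 ^ 2 ≤ 2
  · exact ⟨v, hv, .rfl⟩
  obtain ⟨c', d', hco, hd, hlt⟩ := exists_isCoprime_abs_det_eq_two_sq_add_sq_lt v.2 (by omega)
  obtain ⟨w, hw, hreach⟩ := exists_reachable_sq_add_sq_le_two ⟨(c', d'), hco⟩
  exact ⟨w, hw, (slopeGraph_adj_mk hd).reachable.trans hreach⟩
termination_by (v.1.1 ^ 2 + v.1.2 ^ 2).toNat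
decreasing_by
  have : 0 ≤ c' ^ 2 + d' ^ 2 := by positivity
  omega

lemma reachable_of_sq_add_sq_le_two {v w : CPair} (hv : v.1.1 ^ 2 + v.1.2 ^ 2 ≤ 2)
    (hw : w.1.1 ^ 2 + w.1.2 ^ 2 ≤ 2) (hp : v.1.1 % 2 = w.1.1 % 2) (hq : v.1.2 % 2 = w.1.2 % 2) :
    slopeGraph.Reachable (Quotient.mk signSetoid v) (Quotient.mk signSetoid w) := by
  have heven := two_dvd_det_of_emod_two_eq hp hq
  -- Lagrange's identity bounds the determinant by `|v| |w| ≤ 2`.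
  have hbound := abs_le_of_sq_le_sq' (a := v.1.1 * w.1.2 - w.1.1 * v.1.2) (b := 2)
    (by nlinarith [sq_nonneg (v.1.1 * w.1.1 + v.1.2 * w.1.2)]) two_pos.le
  rcases (by rw [abs_eq two_pos.le]; omega :
      v.1.1 * w.1.2 - w.1.1 * v.1.2 = 0 ∨ |v.1.1 * w.1.2 - w.1.1 * v.1.2| = 2) with h0 | h2
  · rw [Quotient.sound (eq_or_eq_neg_of_det_eq_zero v.2 w.2 h0)]
    exact .rfl
  · exact (slopeGraph_adj_mk h2).reachable

lemma emod_two_eq_of_slopeGraph_reachable_mk {v w : CPair}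
    (h : slopeGraph.Reachable (Quotient.mk signSetoid v) (Quotient.mk signSetoid w)) :
    v.1.1 % 2 = w.1.1 % 2 ∧ v.1.2 % 2 = w.1.2 % 2 :=
  Prod.ext_iff.mp (Slope.parity_eq_of_reachable h)

lemma slopeGraph_reachable_mk_iff (v w : CPair) :
    slopeGraph.Reachable (Quotient.mk signSetoid v) (Quotient.mk signSetoid w) ↔
      v.1.1 % 2 = w.1.1 % 2 ∧ v.1.2 % 2 = w.1.2 % 2 := by
  refine ⟨emod_two_eq_of_slopeGraph_reachable_mk, fun ⟨hp, hq⟩ => ?_⟩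
  obtain ⟨v', hv', hvv'⟩ := exists_reachable_sq_add_sq_le_two v
  obtain ⟨w', hw', hww'⟩ := exists_reachable_sq_add_sq_le_two w
  obtain ⟨hvp, hvq⟩ := emod_two_eq_of_slopeGraph_reachable_mk hvv'
  obtain ⟨hwp, hwq⟩ := emod_two_eq_of_slopeGraph_reachable_mk hww'
  exact hvv'.trans <| (reachable_of_sq_add_sq_le_two hv' hw' (by omega) (by omega)).trans hww'.symm

lemma emod_two_mem_of_isCoprime {p q : ℤ} (h : IsCoprime p q) :
    (p % 2, q % 2) ∈ ({(1, 0), (0, 1), (1, 1)} : Set (ℤ × ℤ)) := by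
  have := not_even_and_even_of_isCoprime h
  simp only [Int.even_iff, Set.mem_insert_iff, Set.mem_singleton_iff, Prod.mk.injEq] at *
  omega

/-- Two vertices `p/q`, `p'/q'` of the intersection number 2 curve complex of the torus lie in
the same connected component iff `p ≡ p'` and `q ≡ q' (mod 2)`; moreover the mod-2 residue of a
coprime pair is one of `(1,0)`, `(0,1)`, `(1,1)`, so the graph has exactly three components. -/
theorem stmt0 :
    (∀ v w : CPair,
      slopeGraph.Reachable (Quotient.mk signSetoid v) (Quotient.mk signSetoid w) ↔
        (v.1.1 % 2 = w.1.1 % 2 ∧ v.1.2 % 2 = w.1.2 % 2)) ∧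
    (∀ v : CPair, (v.1.1 % 2, v.1.2 % 2) ∈ ({(1,0), (0,1), (1,1)} : Set (ℤ × ℤ))) :=
  ⟨slopeGraph_reachable_mk_iff, fun v => emod_two_mem_of_isCoprime v.2⟩
end

section
/- For any matrix in GL(2,ℤ) of finite order, its order is 1, 2, 3, 4, or 6, and it is conjugate in GL(2,ℤ) to exactly one of the seven matrices: [[1,0],[0,1]], [[-1,0],[0,-1]], [[1,0],[0,-1]], [[1,0],[1,-1]], [[0,1],[-1,-1]], [[0,-1],[1,0]], [[0,1],[-1,1]]. -/
/-
If `M ∈ GL(2,ℤ)` has finite order then `det M = ±1`, and with the Lucas sequence `U` of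
`(tr M, det M)` one has `M^(n+1) = U_(n+1) M - det M · U_n`. When `tr M ≥ 2`, or `tr M ≥ 1` and
`det M = -1`, this sequence is positive, so `M^(n+1) = 1` forces `M` to be scalar, hence `M = 1`;
applied to `M` and `-M` this leaves `M = ±1` or the characteristic polynomials `x² ± x + 1`,
`x² + 1` and `x² - 1`. Their discriminants have absolute value at most `4`, and the reduction of
binary quadratic forms (a shear followed by a swap) conjugates `M` to a matrix whose lower-left
entry `c` satisfies `3c² ≤ |disc|`, so `c ∈ {0, ±1}`; such matrices are conjugated to the seven
forms by hand. The forms are separated by trace and determinant, except `diag(1,-1)` and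
`[[1,0],[1,-1]]`, which reduction mod `2` separates. Each form has order dividing `4` or `6`.
-/

open Matrix

theorem Int.exists_abs_add_mul_le (x m : ℤ) (hm : m ≠ 0) : ∃ n : ℤ, 2 * |x + n * m| ≤ |m| := by
  have hr₀ := Int.emod_nonneg x hm
  have hr₁ := Int.emod_lt_abs x hm
  have hx := Int.mul_ediv_add_emod x m
  by_cases hr : 2 * (x % m) ≤ |m|
  · exact ⟨-(x / m), by rwa [show x + -(x / m) * m = x % m by linarith, abs_of_nonneg hr₀]⟩
  · refine ⟨-(x / m) - m.sign, ?_⟩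
    rw [show x + (-(x / m) - m.sign) * m = x % m - |m| by rw [← Int.sign_mul_self_eq_abs]; linarith,
      abs_of_neg (by linarith)]
    linarith

theorem Nat.eq_of_dvd_four_or_dvd_six {m : ℕ} (h : m ∣ 4 ∨ m ∣ 6) :
    m = 1 ∨ m = 2 ∨ m = 3 ∨ m = 4 ∨ m = 6 := by
  have : m ≤ 6 := by
    rcases h with h | h <;> linarith [Nat.le_of_dvd (by norm_num) h]
  interval_cases m <;> revert h <;> decide

theorem Units.isConj_val_iff {M : Type*} [Monoid M] {a : Mˣ} {b : M} :
    IsConj (a : M) b ↔ ∃ c : Mˣ, ((c * a * c⁻¹ : Mˣ) : M) = b := by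
  refine exists_congr fun c => ?_
  rw [SemiconjBy, Units.val_mul, Units.val_mul, Units.mul_inv_eq_iff_eq_mul]

section Lucas

variable {R : Type*} [CommRing R]

def lucasU (t d : R) : ℕ → R
  | 0 => 0
  | 1 => 1
  | n + 2 => t * lucasU t d (n + 1) - d * lucasU t d n

theorem lucasU_monotone [LinearOrder R] [IsStrictOrderedRing R] {t d : R} (ht : 1 ≤ t)
    (hd : d ≤ t - 1) : Monotone (lucasU t d) := by
  have key : ∀ n, 0 ≤ lucasU t d n ∧ lucasU t d n ≤ lucasU t d (n + 1) := by
    intro n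
    induction n with
    | zero => simp [lucasU]
    | succ n ih =>
      obtain ⟨h₀, h₁⟩ := ih
      refine ⟨h₀.trans h₁, ?_⟩
      rw [lucasU]
      rcases le_total d 0 with hd₀ | hd₀ <;> nlinarith
  exact monotone_nat_of_le_succ fun n => (key n).2

theorem lucasU_succ_pos [LinearOrder R] [IsStrictOrderedRing R] {t d : R} (ht : 1 ≤ t)
    (hd : d ≤ t - 1) (n : ℕ) : 0 < lucasU t d (n + 1) :=
  zero_lt_one.trans_le (lucasU_monotone ht hd (Nat.le_add_left 1 n))

end Lucas

section Conj

variable {R n : Type*} [CommRing R] [Fintype n] [DecidableEq n]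

theorem IsConj.trace_eq {M N : Matrix n n R} (h : IsConj M N) : N.trace = M.trace := by
  obtain ⟨P, hP⟩ := h
  rw [show N = P * M * ↑P⁻¹ by rw [hP.eq, mul_assoc, Units.mul_inv, mul_one], trace_mul_cycle,
    Units.inv_mul, one_mul]

theorem IsConj.det_eq {M N : Matrix n n R} (h : IsConj M N) : N.det = M.det := by
  obtain ⟨P, hP⟩ := h
  rw [show N = P * M * ↑P⁻¹ by rw [hP.eq, mul_assoc, Units.mul_inv, mul_one], det_units_conj]

theorem Matrix.isConj_of_mul_eq_one {M N P Q : Matrix n n R} (hPQ : P * Q = 1)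
    (h : P * M = N * P) : IsConj M N :=
  ⟨⟨P, Q, hPQ, mul_eq_one_comm.mp hPQ⟩, h⟩

end Conj

namespace Matrix

section CommRing

variable {R : Type*} [CommRing R]

theorem isConj_shear (a b c d n : R) :
    IsConj !![a, b; c, d] !![a + n * c, b + n * (d - a) - n ^ 2 * c; c, d - n * c] := by
  refine isConj_of_mul_eq_one (P := !![1, n; 0, 1]) (Q := !![1, -n; 0, 1]) ?_ ?_ <;>
  · simp only [mul_fin_two]
    ext i j; fin_cases i <;> fin_cases j <;> simp <;> ring

theorem isConj_swap (a b c d : R) : IsConj !![a, b; c, d] !![d, -c; -b, a] := by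
  refine isConj_of_mul_eq_one (P := !![0, 1; -1, 0]) (Q := !![0, -1; 1, 0]) ?_ ?_ <;>
  · simp only [mul_fin_two]
    ext i j; fin_cases i <;> fin_cases j <;> simp

theorem isConj_neg_offDiag (a b c d : R) : IsConj !![a, b; c, d] !![a, -b; -c, d] := by
  refine isConj_of_mul_eq_one (P := !![1, 0; 0, -1]) (Q := !![1, 0; 0, -1]) ?_ ?_ <;>
  · simp only [mul_fin_two]
    ext i j; fin_cases i <;> fin_cases j <;> simp

theorem sq_eq_trace_smul_sub_det_smul (M : Matrix (Fin 2) (Fin 2) R) :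
    M ^ 2 = M.trace • M - M.det • (1 : Matrix (Fin 2) (Fin 2) R) := by
  nontriviality R
  have h := M.aeval_self_charpoly
  rw [charpoly_fin_two] at h
  simp only [map_add, map_sub, map_pow, Polynomial.aeval_X, map_mul, Polynomial.aeval_C,
    Algebra.algebraMap_eq_smul_one, smul_mul_assoc, one_mul] at h
  rw [← sub_eq_zero, ← h]
  abel

theorem pow_succ_eq_lucasU_smul (M : Matrix (Fin 2) (Fin 2) R) (n : ℕ) :
    M ^ (n + 1) = lucasU M.trace M.det (n + 1) • M - (M.det * lucasU M.trace M.det n) • 1 := by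
  induction n with
  | zero => simp [lucasU]
  | succ n ih =>
    rw [pow_succ, ih, sub_mul, smul_mul_assoc, smul_mul_assoc, ← sq,
      sq_eq_trace_smul_sub_det_smul, one_mul, lucasU]
    module

theorem eq_one_of_pow_eq_one_of_one_le_trace [LinearOrder R] [IsStrictOrderedRing R]
    {M : Matrix (Fin 2) (Fin 2) R} {n : ℕ} (hn : n ≠ 0) (h : M ^ n = 1) (ht : 1 ≤ M.trace)
    (hd : M.det ≤ M.trace - 1) : M = 1 := by
  obtain ⟨n, rfl⟩ := Nat.exists_eq_succ_of_ne_zero hn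
  have hU := lucasU_succ_pos ht hd n
  have hM := (pow_succ_eq_lucasU_smul M n).symm.trans h
  have entry : ∀ i j, lucasU M.trace M.det (n + 1) * M i j
      - M.det * lucasU M.trace M.det n * (1 : Matrix _ _ R) i j = (1 : Matrix _ _ R) i j :=
    fun i j => by simpa using congrFun (congrFun hM i) j
  have h01 : M 0 1 = 0 := by simpa [hU.ne'] using entry 0 1
  have h10 : M 1 0 = 0 := by simpa [hU.ne'] using entry 1 0
  have h11 : M 1 1 = M 0 0 := by
    simpa [hU.ne', eq_comm] using (entry 0 0).trans (entry 1 1).symm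
  rw [trace_fin_two, h11] at ht
  rw [det_fin_two, trace_fin_two, h01, h11] at hd
  have h00 : M 0 0 = 1 := by nlinarith
  rw [eta_fin_two M, h00, h01, h10, h11, h00, one_fin_two]

end CommRing

theorem trace_det_cases_of_isOfFinOrder {M : Matrix (Fin 2) (Fin 2) ℤ} (h : IsOfFinOrder M) :
    M = 1 ∨ M = -1 ∨ (M.det = 1 ∧ |M.trace| ≤ 1) ∨ (M.det = -1 ∧ M.trace = 0) := by
  obtain ⟨n, hn, hMn⟩ := isOfFinOrder_iff_pow_eq_one.1 h
  have hdet : M.det = 1 ∨ M.det = -1 := Int.isUnit_iff.1 ((isUnit_iff_isUnit_det M).1 h.isUnit)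
  have hpos : 1 ≤ M.trace → M.det ≤ M.trace - 1 → M = 1 :=
    eq_one_of_pow_eq_one_of_one_le_trace hn.ne' hMn
  have hneg : M.trace ≤ -1 → M.det ≤ -M.trace - 1 → M = -1 := fun ht hd =>
    neg_eq_iff_eq_neg.1 <| eq_one_of_pow_eq_one_of_one_le_trace (n := 2 * n) (by omega)
      (by rw [(even_two_mul n).neg_pow, pow_mul', hMn, one_pow]) (by rw [trace_neg]; omega)
      (by rw [trace_neg, det_neg]; simpa using hd)
  rcases hdet with hd | hd
  · rcases le_or_gt 2 M.trace with ht | ht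
    · exact .inl (hpos (by omega) (by omega))
    rcases le_or_gt M.trace (-2) with ht' | ht'
    · exact .inr (.inl (hneg (by omega) (by omega)))
    exact .inr (.inr (.inl ⟨hd, abs_le.2 ⟨by omega, by omega⟩⟩))
  · rcases le_or_gt 1 M.trace with ht | ht
    · simp [hpos ht (by omega)] at hd
    rcases le_or_gt M.trace (-1) with ht' | ht'
    · simp [hneg ht' (by omega), det_neg] at hd
    exact .inr (.inr (.inr ⟨hd, by omega⟩))

/-- After a shear making `|2a - tr M| ≤ |c|`, the identity `4bc = disc - (2a - tr M)²` bounds the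
new upper-right entry by `|c|`, and the swap moves it to the lower left. -/
theorem exists_isConj_abs_lt (M : Matrix (Fin 2) (Fin 2) ℤ)
    (h : |M.trace ^ 2 - 4 * M.det| < 3 * M 1 0 ^ 2) :
    ∃ N, IsConj M N ∧ |N 1 0| < |M 1 0| := by
  obtain ⟨a, b, c, d, rfl⟩ : ∃ a b c d, M = !![a, b; c, d] := ⟨_, _, _, _, eta_fin_two M⟩
  simp only [trace_fin_two_of, det_fin_two_of, of_apply, cons_val', cons_val_zero, cons_val_one,
    empty_val', cons_val_fin_one] at h ⊢
  have hc : c ≠ 0 := by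
    rintro rfl
    exact (abs_nonneg _).not_gt (by simpa using h)
  obtain ⟨n, hn⟩ := Int.exists_abs_add_mul_le (a - d) (2 * c) (by omega)
  refine ⟨_, (isConj_shear a b c d n).trans (isConj_swap _ _ _ _), ?_⟩
  simp only [of_apply, cons_val', cons_val_zero, cons_val_one, empty_val', cons_val_fin_one,
    abs_neg]
  set x := a - d + n * (2 * c)
  have hx : x ^ 2 ≤ c ^ 2 := sq_le_sq.2 (by rw [abs_mul, abs_two] at hn; linarith)
  have hc' : 0 < |c| := abs_pos.2 hc
  have key : 4 * |b + n * (d - a) - n ^ 2 * c| * |c| < 4 * (|c| * |c|) := calc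
    4 * |b + n * (d - a) - n ^ 2 * c| * |c|
      = |(a + d) ^ 2 - 4 * (a * d - b * c) - x ^ 2| := by
        rw [show (4 : ℤ) = |4| from rfl, ← abs_mul, ← abs_mul]; congr 1; ring
    _ ≤ |(a + d) ^ 2 - 4 * (a * d - b * c)| + x ^ 2 :=
        (abs_sub _ _).trans_eq (by rw [abs_sq])
    _ < 4 * (|c| * |c|) := by rw [abs_mul_abs_self]; linarith
  nlinarith

theorem exists_isConj_three_mul_sq_le (M : Matrix (Fin 2) (Fin 2) ℤ) :
    ∃ N, IsConj M N ∧ 3 * N 1 0 ^ 2 ≤ |M.trace ^ 2 - 4 * M.det| := by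
  induction hk : (M 1 0).natAbs using Nat.strong_induction_on generalizing M with
  | _ k ih =>
    by_cases hM : 3 * M 1 0 ^ 2 ≤ |M.trace ^ 2 - 4 * M.det|
    · exact ⟨M, .refl M, hM⟩
    obtain ⟨N, hMN, hlt⟩ := exists_isConj_abs_lt M (not_le.1 hM)
    obtain ⟨N', hNN', hN'⟩ := ih _ (by rw [← hk]; zify; simpa using hlt) N rfl
    exact ⟨N', hMN.trans hNN', by rwa [hMN.trace_eq, hMN.det_eq] at hN'⟩

theorem isConj_companion (M : Matrix (Fin 2) (Fin 2) ℤ) (hc : M 1 0 = 1 ∨ M 1 0 = -1) :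
    IsConj M !![0, -M.det; 1, M.trace] := by
  obtain ⟨a, b, c, d, rfl⟩ : ∃ a b c d, M = !![a, b; c, d] := ⟨_, _, _, _, eta_fin_two M⟩
  simp only [trace_fin_two_of, det_fin_two_of, of_apply, cons_val', cons_val_zero, cons_val_one,
    empty_val', cons_val_fin_one] at hc ⊢
  rcases hc with rfl | rfl
  · convert isConj_shear a b 1 d (-a) using 1
    ext i j; fin_cases i <;> fin_cases j <;> simp <;> ring
  · convert (isConj_neg_offDiag a b (-1) d).trans (isConj_shear a (-b) 1 d (-a)) using 1
    ext i j; fin_cases i <;> fin_cases j <;> simp <;> ring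

theorem isConj_companion_or_exists_lower_eq_zero (M : Matrix (Fin 2) (Fin 2) ℤ)
    (h : |M.trace ^ 2 - 4 * M.det| ≤ 4) :
    IsConj M !![0, -M.det; 1, M.trace] ∨ ∃ N, IsConj M N ∧ N 1 0 = 0 := by
  obtain ⟨N, hMN, hN⟩ := exists_isConj_three_mul_sq_le M
  have hc := abs_lt.1 (abs_lt_of_sq_lt_sq (by linarith : N 1 0 ^ 2 < 2 ^ 2) (by norm_num))
  rcases (by omega : N 1 0 = 0 ∨ N 1 0 = 1 ∨ N 1 0 = -1) with hc | hc
  · exact .inr ⟨N, hMN, hc⟩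
  · refine .inl (hMN.trans ?_)
    simpa only [hMN.trace_eq, hMN.det_eq] using isConj_companion N hc

theorem isConj_of_lower_eq_zero (M : Matrix (Fin 2) (Fin 2) ℤ) (hc : M 1 0 = 0)
    (hdet : M.det = -1) (htr : M.trace = 0) :
    IsConj M !![1, 0; 0, -1] ∨ IsConj M !![0, 1; 1, 0] := by
  obtain ⟨a, b, c, d, rfl⟩ : ∃ a b c d, M = !![a, b; c, d] := ⟨_, _, _, _, eta_fin_two M⟩
  simp only [trace_fin_two_of, det_fin_two_of, of_apply, cons_val', cons_val_zero, cons_val_one,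
    empty_val', cons_val_fin_one] at hc hdet htr
  subst hc
  obtain rfl : d = -a := by omega
  have ha : a = 1 ∨ a = -1 := Int.isUnit_iff.1 (.of_mul_eq_one a (by linear_combination -hdet))
  have hshear : IsConj !![a, b; 0, -a] !![a, b % 2; 0, -a] := by
    convert isConj_shear a b 0 (-a) (a * (b / 2)) using 1
    have := Int.mul_ediv_add_emod b 2
    rcases ha with rfl | rfl <;> (ext i j; fin_cases i <;> fin_cases j <;> simp; linarith)
  rcases Int.emod_two_eq b with hb | hb <;> rw [hb] at hshear
  · refine .inl ?_
    rcases ha with rfl | rfl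
    · exact hshear
    · convert hshear.trans (isConj_swap _ _ _ _) using 1; simp
  · refine .inr (hshear.trans ((isConj_swap _ _ _ _).trans ?_))
    convert isConj_companion !![-a, -0; -1, a] (by simp) using 1
    rcases ha with rfl | rfl <;> simp [det_fin_two_of]

theorem isConj_of_det_eq_one (M : Matrix (Fin 2) (Fin 2) ℤ) (hdet : M.det = 1)
    (htr : |M.trace| ≤ 1) : IsConj M !![0, -1; 1, M.trace] := by
  have hdisc : |M.trace ^ 2 - 4 * M.det| ≤ 4 := by
    rw [hdet, abs_le]; constructor <;> nlinarith [abs_le.1 htr]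
  rcases isConj_companion_or_exists_lower_eq_zero M hdisc with hM | ⟨N, hMN, hc⟩
  · rwa [hdet] at hM
  · have hN := hMN.det_eq
    rw [hdet, det_fin_two, hc, mul_zero, sub_zero] at hN
    have htrN := hMN.trace_eq
    rw [trace_fin_two] at htrN
    rcases Int.eq_one_or_neg_one_of_mul_eq_one' hN with ⟨h₀, h₁⟩ | ⟨h₀, h₁⟩ <;>
      rw [abs_le] at htr <;> omega

theorem isConj_of_det_eq_neg_one (M : Matrix (Fin 2) (Fin 2) ℤ) (hdet : M.det = -1)
    (htr : M.trace = 0) : IsConj M !![1, 0; 0, -1] ∨ IsConj M !![1, 0; 1, -1] := by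
  have hreflect : IsConj !![(0 : ℤ), 1; 1, 0] !![1, 0; 1, -1] := by
    simpa using isConj_shear (0 : ℤ) 1 1 0 1
  rcases isConj_companion_or_exists_lower_eq_zero M (by rw [hdet, htr]; norm_num)
    with hM | ⟨N, hMN, hc⟩
  · rw [hdet, htr, neg_neg] at hM
    exact .inr (hM.trans hreflect)
  · rcases isConj_of_lower_eq_zero N hc (by rw [hMN.det_eq, hdet]) (by rw [hMN.trace_eq, htr])
      with hN | hN
    · exact .inl (hMN.trans hN)
    · exact .inr ((hMN.trans hN).trans hreflect)

end Matrix

def torsionNormalForms : Set (Matrix (Fin 2) (Fin 2) ℤ) :=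
  {!![1,0;0,1], !![-1,0;0,-1], !![1,0;0,-1], !![1,0;1,-1],
    !![0,1;-1,-1], !![0,-1;1,0], !![0,1;-1,1]}

theorem exists_isConj_mem_torsionNormalForms {M : Matrix (Fin 2) (Fin 2) ℤ}
    (h : IsOfFinOrder M) : ∃ B, IsConj M B ∧ B ∈ torsionNormalForms := by
  rcases trace_det_cases_of_isOfFinOrder h with rfl | rfl | ⟨hdet, htr⟩ | ⟨hdet, htr⟩
  · exact ⟨_, by rw [one_fin_two], by simp [torsionNormalForms]⟩
  · refine ⟨!![-1, 0; 0, -1], ?_, by simp [torsionNormalForms]⟩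
    convert IsConj.refl _
    ext i j; fin_cases i <;> fin_cases j <;> simp
  · have hM := isConj_of_det_eq_one M hdet htr
    rcases (by rw [abs_le] at htr; omega : M.trace = -1 ∨ M.trace = 0 ∨ M.trace = 1)
      with ht | ht | ht <;> rw [ht] at hM
    · exact ⟨_, hM.trans (by simpa using isConj_neg_offDiag 0 (-1) 1 (-1)),
        by simp [torsionNormalForms]⟩
    · exact ⟨_, hM, by simp [torsionNormalForms]⟩
    · exact ⟨_, hM.trans (by simpa using isConj_neg_offDiag 0 (-1) 1 1),
        by simp [torsionNormalForms]⟩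
  · rcases isConj_of_det_eq_neg_one M hdet htr with hM | hM <;>
      exact ⟨_, hM, by simp [torsionNormalForms]⟩

/-- Both have trace `0` and determinant `-1`; reduction mod `2` sends the first to `1`. -/
theorem not_isConj_diagonal_lowerTriangular :
    ¬ IsConj !![(1 : ℤ), 0; 0, -1] !![1, 0; 1, -1] := by
  intro h
  have h₂ := (Int.castRingHom (ZMod 2)).mapMatrix.toMonoidHom.map_isConj h
  have hone : (Int.castRingHom (ZMod 2)).mapMatrix !![(1 : ℤ), 0; 0, -1] = 1 := by
    ext i j; fin_cases i <;> fin_cases j <;> decide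
  rw [RingHom.toMonoidHom_eq_coe, MonoidHom.coe_coe, hone, isConj_one_right] at h₂
  exact absurd (congrFun (congrFun h₂ 1) 0) (by decide)

theorem eq_of_isConj_of_mem_torsionNormalForms {B B' : Matrix (Fin 2) (Fin 2) ℤ}
    (hB : B ∈ torsionNormalForms) (hB' : B' ∈ torsionNormalForms) (h : IsConj B B') :
    B = B' := by
  have htr := h.trace_eq
  have hdet := h.det_eq
  simp only [torsionNormalForms, Set.mem_insert_iff, Set.mem_singleton_iff] at hB hB'
  rcases hB with rfl | rfl | rfl | rfl | rfl | rfl | rfl <;>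
  rcases hB' with rfl | rfl | rfl | rfl | rfl | rfl | rfl <;>
  first
  | rfl
  | exact absurd h not_isConj_diagonal_lowerTriangular
  | exact absurd h.symm not_isConj_diagonal_lowerTriangular
  | simp [trace_fin_two_of, det_fin_two_of] at htr hdet

theorem pow_four_eq_one_or_pow_six_eq_one_of_mem_torsionNormalForms
    {B : Matrix (Fin 2) (Fin 2) ℤ} (hB : B ∈ torsionNormalForms) : B ^ 4 = 1 ∨ B ^ 6 = 1 := by
  simp only [torsionNormalForms, Set.mem_insert_iff, Set.mem_singleton_iff] at hB
  rcases hB with rfl | rfl | rfl | rfl | rfl | rfl | rfl <;> decide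

/-- Every finite-order element of `GL(2,ℤ)` has order `1, 2, 3, 4` or `6`, and is conjugate
in `GL(2,ℤ)` to exactly one of the seven matrices
`[[1,0],[0,1]], [[-1,0],[0,-1]], [[1,0],[0,-1]], [[1,0],[1,-1]], [[0,1],[-1,-1]],
[[0,-1],[1,0]], [[0,1],[-1,1]]`. -/
theorem stmt4 (A : GL (Fin 2) ℤ) (h : IsOfFinOrder A) :
    (orderOf A = 1 ∨ orderOf A = 2 ∨ orderOf A = 3 ∨ orderOf A = 4 ∨ orderOf A = 6) ∧
    ∃! B : Matrix (Fin 2) (Fin 2) ℤ,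
      B ∈ ({!![1,0;0,1], !![-1,0;0,-1], !![1,0;0,-1], !![1,0;1,-1],
            !![0,1;-1,-1], !![0,-1;1,0], !![0,1;-1,1]} : Set (Matrix (Fin 2) (Fin 2) ℤ)) ∧
      ∃ P : GL (Fin 2) ℤ, ((P * A * P⁻¹ : GL (Fin 2) ℤ) : Matrix (Fin 2) (Fin 2) ℤ) = B := by
  obtain ⟨B, hAB, hB⟩ := exists_isConj_mem_torsionNormalForms (Units.isOfFinOrder_val.2 h)
  refine ⟨?_, B, ⟨hB, Units.isConj_val_iff.1 hAB⟩, ?_⟩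
  · rw [← orderOf_units]
    refine Nat.eq_of_dvd_four_or_dvd_six ?_
    rcases pow_four_eq_one_or_pow_six_eq_one_of_mem_torsionNormalForms hB with hB₄ | hB₆
    · exact .inl (orderOf_dvd_of_pow_eq_one (by simpa [hB₄] using hAB.pow 4))
    · exact .inr (orderOf_dvd_of_pow_eq_one (by simpa [hB₆] using hAB.pow 6))
  · rintro B' ⟨hB', hAB'⟩
    exact (eq_of_isConj_of_mem_torsionNormalForms hB hB'
      (hAB.symm.trans (Units.isConj_val_iff.2 hAB'))).symm
end

section
/- Let φ be an automorphism of a tree (a connected acyclic simple graph). Then exactly one of the following holds: φ fixes a vertex (rotation); φ preserves an edge and exchanges its two endpoints (inversion); or there exists a φ-invariant bi-infinite geodesic path on which φ acts as a nontrivial translation (translation). -/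
/-!
Choose a vertex `v` of minimal displacement `D = d(v, φ v)` and a geodesic `p` from `v` to `φ v`.
If `D = 0`, `φ` is a rotation. If `φ` maps the second vertex of `p` to the penultimate one, then
either `D = 1` and `φ` inverts the edge `p`, or that vertex has displacement `D - 2`, contradicting
minimality. Otherwise the translates `φ ^ q` of `p` concatenate to a bi-infinite walk without
backtracking; in a tree such a walk is a geodesic, and `φ` translates it by `D`.

The three cases exclude each other: in a tree the endpoints of an edge are at different distances
from any vertex, so a fixed vertex rules out an inverted edge; a fixed vertex keeps every orbit
bounded, while a translation moves the points of its geodesic arbitrarily far; and the square of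
an inversion is a rotation, while the square of a translation is a translation.
-/

/-- `φ` fixes a vertex. -/
def IsRotation {V : Type*} (G : SimpleGraph V) (φ : G ≃g G) : Prop :=
  ∃ v : V, φ v = v

/-- `φ` preserves an edge and exchanges its two endpoints. -/
def IsInversion {V : Type*} (G : SimpleGraph V) (φ : G ≃g G) : Prop :=
  ∃ v w : V, G.Adj v w ∧ φ v = w ∧ φ w = v

/-- There is a `φ`-invariant bi-infinite geodesic on which `φ` acts as a nontrivial
translation. -/
def IsTranslation {V : Type*} (G : SimpleGraph V) (φ : G ≃g G) : Prop :=
  ∃ (γ : ℤ → V) (ℓ : ℤ), ℓ ≠ 0 ∧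
    (∀ m n : ℤ, G.dist (γ m) (γ n) = (m - n).natAbs) ∧
    (∀ n : ℤ, φ (γ n) = γ (n + ℓ))

lemma Function.Periodic.forall_of_forall_lt {Q : ℤ → Prop} {D : ℕ}
    (hQ : Function.Periodic Q D) (hD : 0 < D) (h : ∀ k < D, Q k) (n : ℤ) : Q n := by
  have hr := h (n % D).toNat (by have := Int.emod_lt_of_pos n (by omega : (0 : ℤ) < D); omega)
  rwa [Int.toNat_of_nonneg (Int.emod_nonneg n (by omega)), Int.emod_def, mul_comm, ← smul_eq_mul,
    hQ.sub_zsmul_eq] at hr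

namespace SimpleGraph

variable {V V' : Type*} {G : SimpleGraph V} {G' : SimpleGraph V'} {a u v x y z : V}

lemma Reachable.dist_map_le (f : G →g G') (h : G.Reachable u v) :
    G'.dist (f u) (f v) ≤ G.dist u v := by
  obtain ⟨p, hp⟩ := h.exists_walk_length_eq_dist
  exact (dist_le (p.map f)).trans_eq (by rw [p.length_map, hp])

lemma Iso.dist_apply (φ : G ≃g G') (u v : V) : G'.dist (φ u) (φ v) = G.dist u v := by
  by_cases h : G.Reachable u v
  · refine le_antisymm (h.dist_map_le φ.toHom) ?_
    simpa using (h.map φ.toHom).dist_map_le φ.symm.toHom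
  · have h' : ¬G'.Reachable (φ u) (φ v) := fun h' ↦ h (by simpa using h'.map φ.symm.toHom)
    rw [dist_eq_zero_of_not_reachable h, dist_eq_zero_of_not_reachable h']

lemma Walk.dist_getVert_le (p : G.Walk u v) {i j : ℕ} (hij : i ≤ j) :
    G.dist (p.getVert i) (p.getVert j) ≤ j - i :=
  calc G.dist (p.getVert i) (p.getVert j)
      = G.dist (p.getVert i) ((p.drop i).getVert (j - i)) := by
        rw [Walk.drop_getVert, Nat.add_sub_cancel' hij]
    _ ≤ ((p.drop i).take (j - i)).length := dist_le _
    _ ≤ j - i := by simp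

namespace IsTree

lemma length_eq_dist_of_isPath (hG : G.IsTree) {p : G.Walk u v} (hp : p.IsPath) :
    p.length = G.dist u v := by
  obtain ⟨q, hq, hql⟩ := hG.connected.exists_path_of_dist u v
  rw [← hql, (hG.existsUnique_path u v).unique hp hq]

lemma dist_eq_add_one_of_notMem_support (hG : G.IsTree) {q : G.Walk a x} (hq : q.IsPath)
    (h : G.Adj x y) (hy : y ∉ q.support) : G.dist a y = G.dist a x + 1 := by
  rw [← hG.length_eq_dist_of_isPath hq, ← hG.length_eq_dist_of_isPath (hq.concat hy h),
    Walk.length_concat]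

lemma eq_penultimate_of_dist_lt (hG : G.IsTree) {q : G.Walk a x} (hq : q.IsPath)
    (h : G.Adj x y) (hy : G.dist a y < G.dist a x) : y = q.penultimate := by
  refine hG.isAcyclic.eq_penultimate_of_adj_end hq h ?_
  by_contra hy'
  have := hG.dist_eq_add_one_of_notMem_support hq h hy'
  omega

lemma eq_of_adj_of_dist_lt (hG : G.IsTree) (hy : G.Adj x y) (hz : G.Adj x z)
    (hdy : G.dist a y < G.dist a x) (hdz : G.dist a z < G.dist a x) : y = z := by
  obtain ⟨q, hq, -⟩ := hG.connected.exists_path_of_dist a x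
  rw [hG.eq_penultimate_of_dist_lt hq hy hdy, hG.eq_penultimate_of_dist_lt hq hz hdz]

lemma dist_add_one_of_adj_of_ne (hG : G.IsTree) {γ : ℤ → V}
    (hadj : ∀ n, G.Adj (γ n) (γ (n + 1))) (hne : ∀ n, γ (n + 1) ≠ γ (n - 1)) (a : ℤ) (k : ℕ) :
    G.dist (γ a) (γ (a + k + 1)) = G.dist (γ a) (γ (a + k)) + 1 := by
  induction k with
  | zero => simpa using hadj a
  | succ k ih =>
    push_cast
    have hx := (hadj (a + k)).symm
    have hz := hadj (a + (k + 1))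
    rw [← add_assoc] at hz ⊢
    rcases hG.dist_eq_dist_add_one_of_adj (γ a) hz with hcloser | hfarther
    · refine absurd (hG.eq_of_adj_of_dist_lt (a := γ a) hz hx (by omega) (by omega)) ?_
      simpa using hne (a + k + 1)
    · exact hfarther

theorem dist_eq_natAbs_of_adj_of_ne (hG : G.IsTree) {γ : ℤ → V}
    (hadj : ∀ n, G.Adj (γ n) (γ (n + 1))) (hne : ∀ n, γ (n + 1) ≠ γ (n - 1)) (m n : ℤ) :
    G.dist (γ m) (γ n) = (m - n).natAbs := by
  have hk (a : ℤ) (k : ℕ) : G.dist (γ a) (γ (a + k)) = k := by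
    induction k with
    | zero => simp
    | succ k ih => rw [Nat.cast_succ, ← add_assoc, hG.dist_add_one_of_adj_of_ne hadj hne, ih]
  rcases le_total m n with h | h
  · obtain ⟨k, rfl⟩ := Int.exists_add_of_le h
    simpa using hk m k
  · obtain ⟨k, rfl⟩ := Int.exists_add_of_le h
    simpa [dist_comm] using hk n k

end IsTree

/-- `q * p.length + r ↦ (φ ^ q) (p.getVert r)` for `0 ≤ r < p.length`: the concatenation of the
translates of `p`. -/
def Walk.orbitLine (φ : G ≃g G) (p : G.Walk v (φ v)) (n : ℤ) : V :=
  (φ ^ (n / p.length)) (p.getVert (n % p.length).toNat)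

namespace Walk

variable {φ : G ≃g G} {p : G.Walk v (φ v)}

lemma orbitLine_add_length (hp : 0 < p.length) (n : ℤ) :
    p.orbitLine φ (n + p.length) = φ (p.orbitLine φ n) := by
  rw [orbitLine, orbitLine, Int.add_emod_right, Int.add_ediv_of_dvd_right dvd_rfl,
    Int.ediv_self (by omega), add_comm, zpow_one_add, RelIso.mul_apply]

lemma orbitLine_natCast (hp : 0 < p.length) {k : ℕ} (hk : k ≤ p.length) :
    p.orbitLine φ k = p.getVert k := by
  rcases hk.lt_or_eq with hk | rfl
  · rw [orbitLine, Int.ediv_eq_zero_of_lt (by omega) (by omega),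
      Int.emod_eq_of_lt (by omega) (by omega), zpow_zero, Int.toNat_natCast, RelIso.one_apply]
  · rw [orbitLine, Int.ediv_self (by omega), Int.emod_self, zpow_one, Int.toNat_zero,
      getVert_zero, getVert_length]

end Walk

lemma IsTree.isTranslation_of_isPath (hG : G.IsTree) {φ : G ≃g G} {p : G.Walk v (φ v)}
    (hp : p.IsPath) (hpos : 0 < p.length)
    (hback : φ (p.getVert 1) ≠ p.getVert (p.length - 1)) : IsTranslation G φ := by
  have hadj : ∀ n, G.Adj (p.orbitLine φ n) (p.orbitLine φ (n + 1)) := by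
    refine Function.Periodic.forall_of_forall_lt (fun n ↦ ?_) hpos fun k hk ↦ ?_
    · simp only [add_right_comm n, p.orbitLine_add_length hpos, φ.map_adj_iff]
    · rw [← Nat.cast_succ, p.orbitLine_natCast hpos hk.le, p.orbitLine_natCast hpos hk]
      exact p.adj_getVert_succ hk
  have hne : ∀ n, p.orbitLine φ (n + 1) ≠ p.orbitLine φ (n - 1) := by
    refine Function.Periodic.forall_of_forall_lt (fun n ↦ ?_) hpos fun k hk ↦ ?_
    · simp only [add_right_comm n, add_sub_right_comm n, p.orbitLine_add_length hpos,
        φ.injective.ne_iff]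
    · rcases k with _ | k
      · intro h
        apply hback
        have h1 : p.orbitLine φ 1 = p.getVert 1 := by
          exact_mod_cast p.orbitLine_natCast hpos hpos
        have hlast : p.orbitLine φ (-1 + p.length) = p.getVert (p.length - 1) := by
          rw [show -1 + (p.length : ℤ) = (p.length - 1 : ℕ) by omega]
          exact p.orbitLine_natCast hpos (by omega)
        simp only [Nat.cast_zero, zero_add, zero_sub] at h
        rw [← h1, h, ← p.orbitLine_add_length hpos, hlast]
      · rw [show ((k + 1 : ℕ) : ℤ) + 1 = (k + 2 : ℕ) by omega,
          show ((k + 1 : ℕ) : ℤ) - 1 = k by omega, p.orbitLine_natCast hpos (by omega),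
          p.orbitLine_natCast hpos (by omega)]
        exact fun h ↦ absurd (hp.getVert_injOn (by simp; omega) (by simp; omega) h) (by omega)
  exact ⟨p.orbitLine φ, p.length, by omega, hG.dist_eq_natAbs_of_adj_of_ne hadj hne,
    fun n ↦ (p.orbitLine_add_length hpos n).symm⟩

theorem IsTree.isRotation_or_isInversion_or_isTranslation (hG : G.IsTree) (φ : G ≃g G) :
    IsRotation G φ ∨ IsInversion G φ ∨ IsTranslation G φ := by
  have := hG.connected.nonempty
  set v := Function.argmin fun v ↦ G.dist v (φ v)
  have hmin (w : V) : G.dist v (φ v) ≤ G.dist w (φ w) :=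
    Function.argmin_le (fun v ↦ G.dist v (φ v)) w
  obtain ⟨p, hp, hpl⟩ := hG.connected.exists_path_of_dist v (φ v)
  rcases Nat.eq_zero_or_pos p.length with h0 | hpos
  · exact .inl ⟨v, (hG.connected.dist_eq_zero_iff.mp (hpl ▸ h0)).symm⟩
  by_cases hback : φ (p.getVert 1) = p.getVert (p.length - 1)
  · have h1 : p.length = 1 := by
      by_contra h1
      have hshort := p.dist_getVert_le (i := 1) (j := p.length - 1) (by omega)
      have := hmin (p.getVert 1)
      rw [hback] at this
      omega
    refine .inr (.inl ⟨v, φ v, dist_eq_one_iff_adj.mp (hpl ▸ h1), rfl, ?_⟩)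
    rw [h1, Nat.sub_self, Walk.getVert_zero, ← h1, Walk.getVert_length] at hback
    exact hback
  · exact .inr (.inr (hG.isTranslation_of_isPath hp hpos hback))

end SimpleGraph

section

variable {V : Type*} {G : SimpleGraph V} {φ : G ≃g G}

lemma IsRotation.not_isInversion (hG : G.IsTree) (hrot : IsRotation G φ) :
    ¬IsInversion G φ := by
  obtain ⟨v, hv⟩ := hrot
  rintro ⟨a, b, hab, ha, -⟩
  refine hG.dist_ne_of_adj v hab ?_
  rw [← φ.dist_apply v a, hv, ha]

lemma IsRotation.not_isTranslation (hc : G.Connected) (hrot : IsRotation G φ) :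
    ¬IsTranslation G φ := by
  obtain ⟨v, hv⟩ := hrot
  rintro ⟨γ, ℓ, hℓ, hγ, hφγ⟩
  have horbit (k : ℕ) : G.dist v (γ (k * ℓ)) = G.dist v (γ 0) := by
    induction k with
    | zero => simp
    | succ k ih => rw [← ih, ← φ.dist_apply v (γ (k * ℓ)), hv, hφγ, Nat.cast_succ, add_one_mul]
  set k := 2 * G.dist v (γ 0) + 1
  have hbounded : k * ℓ.natAbs ≤ 2 * G.dist v (γ 0) :=
    calc k * ℓ.natAbs = G.dist (γ (k * ℓ)) (γ 0) := by
          rw [hγ, sub_zero, Int.natAbs_mul, Int.natAbs_natCast]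
      _ ≤ G.dist (γ (k * ℓ)) v + G.dist v (γ 0) := hc.dist_triangle
      _ = 2 * G.dist v (γ 0) := by rw [SimpleGraph.dist_comm, horbit, two_mul]
  have : k ≤ k * ℓ.natAbs := Nat.le_mul_of_pos_right k (Int.natAbs_pos.mpr hℓ)
  omega

lemma IsInversion.isRotation_mul_self (h : IsInversion G φ) : IsRotation G (φ * φ) :=
  let ⟨a, _, _, ha, hb⟩ := h
  ⟨a, by rw [RelIso.mul_apply, ha, hb]⟩

lemma IsTranslation.mul_self (h : IsTranslation G φ) : IsTranslation G (φ * φ) :=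
  let ⟨γ, ℓ, hℓ, hγ, hφγ⟩ := h
  ⟨γ, ℓ + ℓ, by omega, hγ, fun n ↦ by rw [RelIso.mul_apply, hφγ, hφγ, add_assoc]⟩

lemma IsInversion.not_isTranslation (hc : G.Connected) (h : IsInversion G φ) :
    ¬IsTranslation G φ :=
  fun ht ↦ h.isRotation_mul_self.not_isTranslation hc ht.mul_self

end

/-- An automorphism of a tree is exactly one of: a rotation (fixing a vertex), an inversion
(preserving an edge and swapping its endpoints), or a translation along an invariant
bi-infinite geodesic. -/
theorem stmt6 {V : Type*} (G : SimpleGraph V) (hG : G.IsTree) (φ : G ≃g G) :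
    (IsRotation G φ ∨ IsInversion G φ ∨ IsTranslation G φ) ∧
    ¬(IsRotation G φ ∧ IsInversion G φ) ∧
    ¬(IsRotation G φ ∧ IsTranslation G φ) ∧
    ¬(IsInversion G φ ∧ IsTranslation G φ) :=
  ⟨hG.isRotation_or_isInversion_or_isTranslation φ,
    fun ⟨hrot, hinv⟩ ↦ hrot.not_isInversion hG hinv,
    fun ⟨hrot, htr⟩ ↦ hrot.not_isTranslation hG.connected htr,
    fun ⟨hinv, htr⟩ ↦ hinv.not_isTranslation hG.connected htr⟩
end

section
/- Define N(p,q) for nonzero coprime integers p, q with p even as follows: write |p|/|q| = [a₀, a₁, …, aₙ] as a continued fraction with a₀ ≥ 0, a₁,…,a_{n-1} > 0, aₙ > 1; set b₀ = a₀ and for i ≥ 1 set bᵢ = aᵢ unless b_{i-1} = a_{i-1} and b₀ + … + b_{i-1} is even, in which case bᵢ = 0; then N(p,q) = (b₀ + … + bₙ)/2. Then b₀ + … + bₙ is always even, so N(p,q) is a nonnegative integer. -/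
/-! Let `Pₖ/Qₖ` be the value of the tail `[aₖ, …, aₙ]` written in lowest terms through the
continuants, with `P/Q = 1/0` for the empty tail, so that `P₀/Q₀ = |p|/|q|` is even/odd.
Scanning the expansion from the left, the running parity of `b₀ + ⋯ + b_{k-1}`, the flag
`b_{k-1} = a_{k-1}` and the parities of `Pₖ, Qₖ` stay in one of three states: (off, even,
even/odd), (on, even, odd/even), (on, odd, odd/odd). The empty tail `1/0` is odd/even, so the
scan can only end in the second state, with an even sum. -/

/-- The value of the continued fraction `[a₀, a₁, …, aₙ] = a₀ + 1/(a₁ + 1/(⋯ + 1/aₙ))`. -/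
def cfVal : List ℕ → ℚ
  | [] => 0
  | [a] => (a : ℚ)
  | a :: l => (a : ℚ) + 1 / cfVal l

/-- Bredon–Wood sum: given the list `[a₀, …, aₙ]`, a running sum `s` of the `bⱼ` so far, and a
flag recording whether the previous `b` equalled the previous `a`, compute `b₀ + ⋯ + bₙ`,
where `b₀ = a₀` and, for `i ≥ 1`, `bᵢ = 0` if `b_{i-1} = a_{i-1}` and `b₀ + ⋯ + b_{i-1}` is
even, and `bᵢ = aᵢ` otherwise. -/
def bwAux : List ℕ → ℕ → Bool → ℕ
  | [], s, _ => s
  | a :: l, s, full =>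
    let b := if full = true ∧ Even s then 0 else a
    bwAux l (s + b) (decide (b = a))

-- `[]` stands for `∞ = 1/0`, which `ℚ` evaluates to `0 = cfVal []`.
def cfNum : List ℕ → ℕ
  | [] => 1
  | [a] => a
  | a :: b :: l => a * cfNum (b :: l) + cfNum l

def cfDen : List ℕ → ℕ
  | [] => 0
  | _ :: l => cfNum l

theorem cfNum_cons (a : ℕ) (l : List ℕ) : cfNum (a :: l) = a * cfNum l + cfDen l := by
  cases l <;> simp [cfNum, cfDen]

theorem cfDen_cons (a : ℕ) (l : List ℕ) : cfDen (a :: l) = cfNum l := rfl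

theorem cfVal_cons (a : ℕ) (l : List ℕ) : cfVal (a :: l) = a + (cfVal l)⁻¹ := by
  cases l <;> simp [cfVal]

theorem cfNum_pos {l : List ℕ} (hl : ∀ a ∈ l, 0 < a) : 0 < cfNum l := by
  induction l with
  | nil => simp [cfNum]
  | cons a t ih =>
    simp only [List.mem_cons, forall_eq_or_imp] at hl
    have := mul_pos hl.1 (ih hl.2)
    rw [cfNum_cons]
    omega

theorem coprime_cfNum_cfDen (l : List ℕ) : Nat.Coprime (cfNum l) (cfDen l) := by
  induction l with
  | nil => simp [cfNum, cfDen]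
  | cons a t ih => simpa [cfNum_cons, cfDen_cons, add_comm] using ih.symm

theorem cfVal_eq_cfNum_div_cfDen {l : List ℕ} (hl : ∀ a ∈ l.tail, 0 < a) :
    cfVal l = cfNum l / cfDen l := by
  induction l with
  | nil => simp [cfVal, cfNum, cfDen]
  | cons a t ih =>
    have hnum : (cfNum t : ℚ) ≠ 0 := by exact_mod_cast (cfNum_pos hl).ne'
    rw [cfVal_cons, ih fun b hb => hl b (List.mem_of_mem_tail hb), cfNum_cons, cfDen_cons]
    push_cast
    field_simp

theorem even_bwAux {l : List ℕ} (hl : ∀ a ∈ l.tail, 0 < a) (s : ℕ) :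
    (Even (cfNum l) → Odd (cfDen l) → Even s → Even (bwAux l s false)) ∧
    ((∀ a ∈ l.head?, 0 < a) → Odd (cfNum l) → Even (cfDen l) → Even s →
      Even (bwAux l s true)) ∧
    (Odd (cfNum l) → Odd (cfDen l) → Odd s → Even (bwAux l s true)) := by
  induction l generalizing s with
  | nil => simp [cfNum, cfDen, bwAux]
  | cons a t ih =>
    have ht : ∀ b ∈ t, 0 < b := hl
    specialize ih fun b hb => ht b (List.mem_of_mem_tail hb)
    have ihB : ∀ s, Odd (cfNum t) → Even (cfDen t) → Even s → Even (bwAux t s true) :=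
      fun s => (ih s).2.1 fun b hb => ht b (List.mem_of_mem_head? hb)
    simp only [cfNum_cons, cfDen_cons, bwAux, Bool.false_eq_true, false_and, if_false, true_and]
    refine ⟨fun hn hd hs => ?_, fun ha hn hd hs => ?_, fun hn hd hs => ?_⟩
    · rw [decide_true]
      rcases Nat.even_or_odd a with ha | ha
      · exact ihB (s + a) hd (by grind) (hs.add ha)
      · exact (ih (s + a)).2.2 hd (by grind) (hs.add_odd ha)
    · have ha : a ≠ 0 := (ha a rfl).ne'
      simpa [hs, Ne.symm ha] using (ih s).1 hd (by grind) hs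
    · simp only [Nat.not_even_iff_odd.mpr hs, if_false, decide_true]
      rcases Nat.even_or_odd a with ha | ha
      · exact (ih (s + a)).2.2 hd (by grind) (hs.add_even ha)
      · exact ihB (s + a) hd (by grind) (hs.add_odd ha)

theorem cfNum_mul_eq_mul_cfDen {a : ℕ} {t : List ℕ} (ht : ∀ b ∈ t, 0 < b) {x y : ℕ}
    (hy : y ≠ 0) (h : cfVal (a :: t) = x / y) : cfNum (a :: t) * y = x * cfDen (a :: t) := by
  have hden : (cfDen (a :: t) : ℚ) ≠ 0 := by exact_mod_cast (cfNum_pos ht).ne'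
  rw [cfVal_eq_cfNum_div_cfDen (l := a :: t) ht, div_eq_div_iff hden (by exact_mod_cast hy)] at h
  exact_mod_cast h

theorem even_and_odd_of_mul_eq_mul {n d x y : ℕ} (h : n * y = x * d) (hx : Even x) (hy : Odd y)
    (hnd : n.Coprime d) : Even n ∧ Odd d := by
  have hn : Even n :=
    (Nat.even_mul.mp (h ▸ hx.mul_right d)).resolve_right (Nat.not_even_iff_odd.mpr hy)
  exact ⟨hn, Nat.coprime_two_left.mp (Nat.Coprime.coprime_dvd_left (even_iff_two_dvd.mp hn) hnd)⟩

theorem pos_of_mem_tail {L : List ℕ} (hmid : ∀ i : ℕ, 0 < i → i + 1 < L.length → 0 < L.getD i 0)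
    (hlast : 2 ≤ L.length → 1 < L.getD (L.length - 1) 0) : ∀ a ∈ L.tail, 0 < a := by
  intro a ha
  obtain ⟨i, hi, rfl⟩ := List.getElem_of_mem ha
  rw [List.length_tail] at hi
  rw [List.getElem_tail, ← List.getD_eq_getElem _ 0]
  rcases Nat.lt_or_ge (i + 2) L.length with h | h
  · exact hmid (i + 1) i.succ_pos h
  · have := hlast (by omega)
    rw [show L.length - 1 = i + 1 by omega] at this
    omega

theorem stmt9_general (p q : ℤ) (hcop : IsCoprime p q)
    (hpe : p % 2 = 0) (L : List ℕ)
    (hmid : ∀ i : ℕ, 0 < i → i + 1 < L.length → 0 < L.getD i 0)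
    (hlast : 2 ≤ L.length → 1 < L.getD (L.length - 1) 0)
    (hval : cfVal L = (p.natAbs : ℚ) / (q.natAbs : ℚ)) :
    Even (bwAux L 0 false) := by
  have hq : Odd q :=
    Int.isCoprime_two_left.mp (hcop.of_isCoprime_of_dvd_left (Int.dvd_of_emod_eq_zero hpe))
  have htail := pos_of_mem_tail hmid hlast
  rcases L with _ | ⟨a, t⟩
  · exact Even.zero
  obtain ⟨hnum, hden⟩ := even_and_odd_of_mul_eq_mul
    (cfNum_mul_eq_mul_cfDen htail (Int.natAbs_odd.mpr hq).pos.ne' hval)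
    (Int.natAbs_even.mpr (Int.even_iff.mpr hpe)) (Int.natAbs_odd.mpr hq) (coprime_cfNum_cfDen _)
  exact (even_bwAux htail 0).1 hnum hden Even.zero

/-- For nonzero coprime integers `p, q` with `p` even, write `|p|/|q| = [a₀, …, aₙ]` as a
continued fraction with `a₀ ≥ 0`, `a₁, …, a_{n-1} > 0`, `aₙ > 1`. Then the Bredon–Wood sum
`b₀ + ⋯ + bₙ` is even, so `N(p,q) = (b₀ + ⋯ + bₙ)/2` is a nonnegative integer. -/
theorem stmt9 (p q : ℤ) (hp : p ≠ 0) (hq : q ≠ 0) (hcop : IsCoprime p q)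
    (hpe : p % 2 = 0) (L : List ℕ) (hL : L ≠ [])
    (hmid : ∀ i : ℕ, 0 < i → i + 1 < L.length → 0 < L.getD i 0)
    (hlast : 2 ≤ L.length → 1 < L.getD (L.length - 1) 0)
    (hval : cfVal L = (p.natAbs : ℚ) / (q.natAbs : ℚ)) :
    Even (bwAux L 0 false) :=
  stmt9_general p q hcop hpe L hmid hlast hval
end
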